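/- For every n ≥ 1, Var_μ(S_n) = ‖u_n‖²_{L²} + ∑_{k=1}^{n−1} ( ‖u_k‖²_{L²} − ‖E[u_k | T_{a_{k+1}}^{-1}(𝓕)]‖²_{L²} ); equivalently, Var_μ(S_n) = Var_μ(Z_n) + ∑_{k=1}^{n−1} ‖u_k‖²_{L²}(1 − cos²χ_k). -/

import Mathlib

/-!
Setting: `(X, 𝓕, μ)` a probability space, `A` an index set, `T a : X → X` measurable,
surjective, non-invertible, `μ`-preserving maps, and a fixed sequence `a 1, a 2, … ∈ A`.
`T_{[k]} := T_{a_k} ∘ ⋯ ∘ T_{a_1}`.  The Koopman operator `T̂ g = g ∘ T` acts on `L²(μ)` and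
the Perron–Frobenius operator `T̂*` is its `L²(μ)`-adjoint.
-/

open MeasureTheory ProbabilityTheory Filter
open scoped ENNReal Topology

/-- The Koopman operator `g ↦ g ∘ T` on `L²(μ)`. -/
noncomputable def koopman {X : Type*} [MeasurableSpace X] {μ : Measure X} {T : X → X}
    (hT : MeasurePreserving T μ μ) : Lp ℝ 2 μ →L[ℝ] Lp ℝ 2 μ :=
  (Lp.compMeasurePreservingₗᵢ ℝ T hT).toContinuousLinearMap

/-- The Perron–Frobenius operator: the `L²(μ)`-adjoint of the Koopman operator. -/
noncomputable def PF {X : Type*} [MeasurableSpace X] {μ : Measure X} {T : X → X}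
    (hT : MeasurePreserving T μ μ) : Lp ℝ 2 μ →L[ℝ] Lp ℝ 2 μ :=
  ContinuousLinearMap.adjoint (koopman hT)

/-- `Titer T a k = T_{[k]} = T_{a_k} ∘ ⋯ ∘ T_{a_1}` (the identity for `k = 0`). -/
def Titer {X A : Type*} (T : A → X → X) (a : ℕ → A) : ℕ → X → X
  | 0 => id
  | k + 1 => T (a (k + 1)) ∘ Titer T a k

/-- `PFseg hT a i j = T̂*_{[i..j]} = T̂*_{a_j} ⋯ T̂*_{a_i}` for `i ≤ j`, the identity otherwise. -/
noncomputable def PFseg {X A : Type*} [MeasurableSpace X] {μ : Measure X} {T : A → X → X}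
    (hT : ∀ b, MeasurePreserving (T b) μ μ) (a : ℕ → A) (i : ℕ) :
    ℕ → (Lp ℝ 2 μ →L[ℝ] Lp ℝ 2 μ)
  | 0 => ContinuousLinearMap.id ℝ _
  | j + 1 =>
    if i ≤ j + 1 then (PF (hT (a (j + 1)))).comp (PFseg hT a i j)
    else ContinuousLinearMap.id ℝ _

/-- `T̂*_{b_1} ⋯ T̂*_{b_k} g` for a finite sequence `[b_1, …, b_k]`. -/
noncomputable def PFlist {X A : Type*} [MeasurableSpace X] {μ : Measure X} {T : A → X → X}
    (hT : ∀ b, MeasurePreserving (T b) μ μ) (l : List A) (g : Lp ℝ 2 μ) : Lp ℝ 2 μ :=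
  l.foldr (fun b h => PF (hT b) h) g

/-- `useq hT a f k = u_k = ∑_{i=1}^k T̂*_{[i+1..k]} f`. -/
noncomputable def useq {X A : Type*} [MeasurableSpace X] {μ : Measure X} {T : A → X → X}
    (hT : ∀ b, MeasurePreserving (T b) μ μ) (a : ℕ → A) (f : Lp ℝ 2 μ) (k : ℕ) : Lp ℝ 2 μ :=
  ∑ i ∈ Finset.Icc 1 k, PFseg hT a (i + 1) k f

/-- The Birkhoff-like sums `S_n = ∑_{k=1}^n f ∘ T_{[k]}`. -/
def birkhoffS {X A : Type*} (T : A → X → X) (a : ℕ → A) (f : X → ℝ) (n : ℕ) : X → ℝ :=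
  fun x => ∑ k ∈ Finset.Icc 1 n, f (Titer T a k x)

/-- `cos²χ_k = ‖E[u_k | T_{a_{k+1}}^{-1}(𝓕)]‖²_{L²} / ‖u_k‖²_{L²}` (`= 0` when `u_k = 0`,
by the convention `c / 0 = 0`). -/
noncomputable def cos2chi {X A : Type*} [MeasurableSpace X] (μ : Measure X) {T : A → X → X}
    (hT : ∀ b, MeasurePreserving (T b) μ μ) (a : ℕ → A) (f : Lp ℝ 2 μ) (k : ℕ) : ℝ :=
  (∫ x, ((μ[(useq hT a f k : X → ℝ)|MeasurableSpace.comap (T (a (k + 1))) ‹_›]) x) ^ 2 ∂μ) /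
    ∫ x, ((useq hT a f k : X → ℝ) x) ^ 2 ∂μ

/-- `𝓕_k := T_{[k]}^{-1}(𝓕)`, the pullback σ-algebra. -/
def Fsig {X A : Type*} [m0 : MeasurableSpace X] (T : A → X → X) (a : ℕ → A) (k : ℕ) :
    MeasurableSpace X :=
  MeasurableSpace.comap (Titer T a k) m0

/-- `Z_k := u_k ∘ T_{[k]}`. -/
noncomputable def Zfun {X A : Type*} [MeasurableSpace X] {μ : Measure X} {T : A → X → X}
    (hT : ∀ b, MeasurePreserving (T b) μ μ) (a : ℕ → A) (f : Lp ℝ 2 μ) (k : ℕ) : X → ℝ :=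
  fun x => (useq hT a f k : X → ℝ) (Titer T a k x)

/-!
In `L²(μ)` the Birkhoff sum is `S_n = ∑_{k=1}^n T̂_{[k]} f`. Koopman operators are isometries with
adjoint `T̂*`, so `⟪S_k, T̂_{[k]} g⟫ = ⟪u_k, g⟫`. Expanding `‖S_{k+1}‖² = ‖S_k + T̂_{[k]} T̂_{a_{k+1}} f‖²`
and `‖u_{k+1}‖² = ‖T̂*_{a_{k+1}} u_k + f‖²` gives the same cross term, so `‖S_k‖² − ‖u_k‖²` grows by
exactly `‖u_k‖² − ‖T̂*_{a_{k+1}} u_k‖²` at each step. Finally `E[g | T⁻¹𝓕] = T̂ T̂* g`, whose norm is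
`‖T̂* g‖`.
-/

open scoped RealInnerProductSpace

section KoopmanPF

variable {X : Type*} [m0 : MeasurableSpace X] {μ : Measure X} {S R : X → X}

lemma integral_sq_eq_norm_sq (g : Lp ℝ 2 μ) : ∫ x, g x ^ 2 ∂μ = ‖g‖ ^ 2 := by
  rw [← real_inner_self_eq_norm_sq, L2.inner_def]
  simp only [RCLike.inner_apply, conj_trivial, sq]

lemma variance_eq_norm_sq_of_integral_eq_zero (g : Lp ℝ 2 μ) (hg : ∫ x, g x ∂μ = 0) :
    variance (g : X → ℝ) μ = ‖g‖ ^ 2 := by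
  rw [variance_of_integral_eq_zero (Lp.aestronglyMeasurable g).aemeasurable hg,
    integral_sq_eq_norm_sq]

lemma inner_Lp_const_one [IsFiniteMeasure μ] (g : Lp ℝ 2 μ) :
    ⟪Lp.const 2 μ (1 : ℝ), g⟫ = ∫ x, g x ∂μ := by
  rw [← indicatorConstLp_univ, L2.inner_indicatorConstLp_one, Measure.restrict_univ]

lemma coeFn_koopman (hS : MeasurePreserving S μ μ) (g : Lp ℝ 2 μ) :
    koopman hS g =ᵐ[μ] g ∘ S :=
  Lp.coeFn_compMeasurePreserving g hS

lemma inner_koopman_koopman (hS : MeasurePreserving S μ μ) (g h : Lp ℝ 2 μ) :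
    ⟪koopman hS g, koopman hS h⟫ = ⟪g, h⟫ :=
  (Lp.compMeasurePreservingₗᵢ ℝ S hS).inner_map_map g h

lemma norm_koopman (hS : MeasurePreserving S μ μ) (g : Lp ℝ 2 μ) : ‖koopman hS g‖ = ‖g‖ :=
  Lp.norm_compMeasurePreserving g hS

lemma inner_PF_left (hS : MeasurePreserving S μ μ) (g h : Lp ℝ 2 μ) :
    ⟪PF hS g, h⟫ = ⟪g, koopman hS h⟫ :=
  ContinuousLinearMap.adjoint_inner_left (koopman hS) h g

lemma koopman_comp_apply (hS : MeasurePreserving S μ μ) (hR : MeasurePreserving R μ μ)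
    (g : Lp ℝ 2 μ) : koopman (hS.comp hR) g = koopman hR (koopman hS g) :=
  Lp.compMeasurePreserving_comp_apply g hS hR

lemma koopman_Lp_const [IsFiniteMeasure μ] (hS : MeasurePreserving S μ μ) (c : ℝ) :
    koopman hS (Lp.const 2 μ c) = Lp.const 2 μ c := by
  refine Lp.ext ((coeFn_koopman hS _).trans ?_)
  exact (hS.quasiMeasurePreserving.ae_eq (Lp.coeFn_const 2 μ c)).trans (Lp.coeFn_const 2 μ c).symm

lemma integral_koopman [IsFiniteMeasure μ] (hS : MeasurePreserving S μ μ) (g : Lp ℝ 2 μ) :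
    ∫ x, koopman hS g x ∂μ = ∫ x, g x ∂μ := by
  rw [← inner_Lp_const_one, ← koopman_Lp_const hS, inner_koopman_koopman, inner_Lp_const_one]

lemma integral_PF [IsFiniteMeasure μ] (hS : MeasurePreserving S μ μ) (g : Lp ℝ 2 μ) :
    ∫ x, PF hS g x ∂μ = ∫ x, g x ∂μ := by
  rw [← inner_Lp_const_one, ← inner_Lp_const_one, real_inner_comm, inner_PF_left,
    koopman_Lp_const, real_inner_comm]

lemma condExp_comap_ae_eq_koopman_PF [IsFiniteMeasure μ] (hS : MeasurePreserving S μ μ)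
    (g : Lp ℝ 2 μ) : μ[g|m0.comap S] =ᵐ[μ] koopman hS (PF hS g) := by
  have hSm := hS.measurable
  refine (ae_eq_condExp_of_forall_setIntegral_eq hSm.comap_le ((Lp.memLp g).integrable one_le_two)
    (fun s _ _ => ((Lp.memLp _).integrable one_le_two).integrableOn) ?_ ?_).symm
  · rintro s ⟨t, ht, rfl⟩ -
    have hind : koopman hS (indicatorConstLp 2 ht (measure_ne_top μ t) (1 : ℝ))
        = indicatorConstLp 2 (ht.preimage hSm) (measure_ne_top μ _) (1 : ℝ) :=
      Lp.indicatorConstLp_compMeasurePreserving ht (measure_ne_top μ t) 1 hS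
    have hpre := ht.preimage hSm
    rw [← L2.inner_indicatorConstLp_one hpre (measure_ne_top μ _),
      ← L2.inner_indicatorConstLp_one hpre (measure_ne_top μ _), ← hind,
      inner_koopman_koopman, real_inner_comm, inner_PF_left, real_inner_comm]
  · have hPg := Lp.aestronglyMeasurable (PF hS g)
    refine ⟨hPg.mk _ ∘ S, hPg.stronglyMeasurable_mk.comp_measurable (comap_measurable S), ?_⟩
    exact (coeFn_koopman hS _).trans (hS.quasiMeasurePreserving.ae_eq hPg.ae_eq_mk)

lemma integral_sq_condExp_comap [IsFiniteMeasure μ] (hS : MeasurePreserving S μ μ)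
    (g : Lp ℝ 2 μ) : ∫ x, (μ[g|m0.comap S]) x ^ 2 ∂μ = ‖PF hS g‖ ^ 2 := by
  calc ∫ x, (μ[g|m0.comap S]) x ^ 2 ∂μ = ∫ x, koopman hS (PF hS g) x ^ 2 ∂μ :=
        integral_congr_ae ((condExp_comap_ae_eq_koopman_PF hS g).fun_comp (· ^ 2))
    _ = ‖PF hS g‖ ^ 2 := by rw [integral_sq_eq_norm_sq, norm_koopman]

end KoopmanPF

lemma measurePreserving_Titer {X A : Type*} [MeasurableSpace X] {μ : Measure X}
    {T : A → X → X} (hT : ∀ b, MeasurePreserving (T b) μ μ) (a : ℕ → A) :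
    ∀ k, MeasurePreserving (Titer T a k) μ μ
  | 0 => MeasurePreserving.id μ
  | k + 1 => (hT (a (k + 1))).comp (measurePreserving_Titer hT a k)

section Sequential

variable {X : Type*} [MeasurableSpace X] {μ : Measure X} {A : Type*} {T : A → X → X}
  (hT : ∀ b, MeasurePreserving (T b) μ μ) (a : ℕ → A)

lemma koopman_Titer_zero_apply (g : Lp ℝ 2 μ) :
    koopman (measurePreserving_Titer hT a 0) g = g :=
  Lp.compMeasurePreserving_id_apply g

lemma koopman_Titer_succ_apply (k : ℕ) (g : Lp ℝ 2 μ) :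
    koopman (measurePreserving_Titer hT a (k + 1)) g
      = koopman (measurePreserving_Titer hT a k) (koopman (hT (a (k + 1))) g) :=
  koopman_comp_apply (hT (a (k + 1))) (measurePreserving_Titer hT a k) g

lemma PFseg_of_lt : ∀ {i j : ℕ}, j < i → PFseg hT a i j = ContinuousLinearMap.id ℝ _
  | _, 0, _ => rfl
  | _, j + 1, h => by rw [PFseg, if_neg (by omega)]

lemma PFseg_succ_of_le {i j : ℕ} (h : i ≤ j + 1) :
    PFseg hT a i (j + 1) = (PF (hT (a (j + 1)))).comp (PFseg hT a i j) := by
  rw [PFseg, if_pos h]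

lemma useq_zero (f : Lp ℝ 2 μ) : useq hT a f 0 = 0 := by
  simp [useq]

lemma useq_succ (f : Lp ℝ 2 μ) (k : ℕ) :
    useq hT a f (k + 1) = PF (hT (a (k + 1))) (useq hT a f k) + f := by
  rw [useq, Finset.sum_Icc_succ_top (by omega), PFseg_of_lt hT a (by omega), useq, map_sum]
  congr 1
  refine Finset.sum_congr rfl fun i hi => ?_
  rw [PFseg_succ_of_le hT a (by grind), ContinuousLinearMap.comp_apply]

lemma integral_useq [IsFiniteMeasure μ] (f : Lp ℝ 2 μ) (hf : ∫ x, f x ∂μ = 0) (k : ℕ) :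
    ∫ x, useq hT a f k x ∂μ = 0 := by
  induction k with
  | zero => rw [useq_zero, ← inner_Lp_const_one, inner_zero_right]
  | succ k ih =>
    rw [useq_succ, ← inner_Lp_const_one, inner_add_right, inner_Lp_const_one,
      inner_Lp_const_one, integral_PF, ih, hf, add_zero]

lemma inner_koopman_Titer_of_le (f g : Lp ℝ 2 μ) {i k : ℕ} (hik : i ≤ k) :
    ⟪koopman (measurePreserving_Titer hT a i) f, koopman (measurePreserving_Titer hT a k) g⟫
      = ⟪PFseg hT a (i + 1) k f, g⟫ := by
  induction k generalizing g with
  | zero =>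
    obtain rfl : i = 0 := Nat.le_zero.1 hik
    rw [koopman_Titer_zero_apply hT a, koopman_Titer_zero_apply hT a]
    rfl
  | succ k ih =>
    rcases hik.eq_or_lt with rfl | hik
    · rw [inner_koopman_koopman, PFseg_of_lt hT a (by omega), ContinuousLinearMap.id_apply]
    · rw [koopman_Titer_succ_apply, ih _ (by omega), PFseg_succ_of_le hT a (by omega),
        ContinuousLinearMap.comp_apply, inner_PF_left]

noncomputable def birkhoffL2 (f : Lp ℝ 2 μ) (n : ℕ) : Lp ℝ 2 μ :=
  ∑ k ∈ Finset.Icc 1 n, koopman (measurePreserving_Titer hT a k) f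

lemma birkhoffS_ae_eq_birkhoffL2 (f : Lp ℝ 2 μ) (n : ℕ) :
    birkhoffS T a f n =ᵐ[μ] birkhoffL2 hT a f n := by
  have hterms : ∀ᵐ x ∂μ, ∀ k ∈ Finset.Icc 1 n,
      koopman (measurePreserving_Titer hT a k) f x = f (Titer T a k x) :=
    (eventually_all_finset _).2 fun k _ => coeFn_koopman (measurePreserving_Titer hT a k) f
  filter_upwards [hterms, Lp.coeFn_fun_finsetSum (Finset.Icc 1 n)
    fun k => koopman (measurePreserving_Titer hT a k) f] with x hx hsum
  rw [birkhoffL2, hsum]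
  exact Finset.sum_congr rfl fun k hk => (hx k hk).symm

lemma integral_birkhoffL2 [IsFiniteMeasure μ] (f : Lp ℝ 2 μ) (hf : ∫ x, f x ∂μ = 0) (n : ℕ) :
    ∫ x, birkhoffL2 hT a f n x ∂μ = 0 := by
  rw [← inner_Lp_const_one, birkhoffL2, inner_sum]
  refine Finset.sum_eq_zero fun k _ => ?_
  rw [inner_Lp_const_one, integral_koopman, hf]

lemma inner_birkhoffL2_koopman_Titer (f g : Lp ℝ 2 μ) (k : ℕ) :
    ⟪birkhoffL2 hT a f k, koopman (measurePreserving_Titer hT a k) g⟫ = ⟪useq hT a f k, g⟫ := by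
  rw [birkhoffL2, useq, sum_inner, sum_inner]
  exact Finset.sum_congr rfl fun i hi =>
    inner_koopman_Titer_of_le hT a f g (Finset.mem_Icc.1 hi).2

lemma norm_sq_birkhoffL2_sub_succ (f : Lp ℝ 2 μ) (k : ℕ) :
    ‖birkhoffL2 hT a f (k + 1)‖ ^ 2 - ‖useq hT a f (k + 1)‖ ^ 2
      = ‖birkhoffL2 hT a f k‖ ^ 2 - ‖useq hT a f k‖ ^ 2
        + (‖useq hT a f k‖ ^ 2 - ‖PF (hT (a (k + 1))) (useq hT a f k)‖ ^ 2) := by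
  have hS : birkhoffL2 hT a f (k + 1) = birkhoffL2 hT a f k
      + koopman (measurePreserving_Titer hT a k) (koopman (hT (a (k + 1))) f) := by
    rw [birkhoffL2, Finset.sum_Icc_succ_top (by omega), koopman_Titer_succ_apply]
    rfl
  have hcross : ⟪birkhoffL2 hT a f k,
      koopman (measurePreserving_Titer hT a k) (koopman (hT (a (k + 1))) f)⟫
        = ⟪PF (hT (a (k + 1))) (useq hT a f k), f⟫ := by
    rw [inner_birkhoffL2_koopman_Titer, inner_PF_left]
  rw [hS, useq_succ, norm_add_sq_real, norm_add_sq_real, hcross, norm_koopman, norm_koopman]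
  ring

lemma norm_sq_birkhoffL2 (f : Lp ℝ 2 μ) (n : ℕ) :
    ‖birkhoffL2 hT a f n‖ ^ 2 = ‖useq hT a f n‖ ^ 2
      + ∑ k ∈ Finset.Icc 1 (n - 1),
          (‖useq hT a f k‖ ^ 2 - ‖PF (hT (a (k + 1))) (useq hT a f k)‖ ^ 2) := by
  have hD0 : ‖birkhoffL2 hT a f 0‖ ^ 2 - ‖useq hT a f 0‖ ^ 2 = 0 := by
    simp [birkhoffL2, useq_zero]
  have htel := Finset.sum_range_sub
    (fun k => ‖birkhoffL2 hT a f k‖ ^ 2 - ‖useq hT a f k‖ ^ 2) n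
  simp only [norm_sq_birkhoffL2_sub_succ, add_sub_cancel_left, hD0, sub_zero] at htel
  rcases n with _ | n
  · simp [birkhoffL2, useq_zero]
  rw [Finset.sum_range_eq_add_Ico _ (by omega : 0 < n + 1), useq_zero, map_zero, sub_self, zero_add,
    Finset.Ico_add_one_right_eq_Icc] at htel
  rw [Nat.add_sub_cancel, htel]
  ring

end Sequential

theorem variance_birkhoff_eq_sum_angles_general
    {X : Type*} [MeasurableSpace X] (μ : Measure X) [IsProbabilityMeasure μ]
    {A : Type*} (T : A → X → X)
    (hT : ∀ b, MeasurePreserving (T b) μ μ)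
    (a : ℕ → A) (f : Lp ℝ 2 μ) (hfmean : ∫ x, f x ∂μ = 0) :
    ∀ n : ℕ, 1 ≤ n →
      variance (birkhoffS T a (f : X → ℝ) n) μ =
        (∫ x, ((useq hT a f n : X → ℝ) x) ^ 2 ∂μ) +
          ∑ k ∈ Finset.Icc 1 (n - 1),
            ((∫ x, ((useq hT a f k : X → ℝ) x) ^ 2 ∂μ) -
              ∫ x, ((μ[(useq hT a f k : X → ℝ)|
                MeasurableSpace.comap (T (a (k + 1))) ‹_›]) x) ^ 2 ∂μ) ∧
      variance (birkhoffS T a (f : X → ℝ) n) μ =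
        variance (Zfun hT a f n) μ +
          ∑ k ∈ Finset.Icc 1 (n - 1),
            (∫ x, ((useq hT a f k : X → ℝ) x) ^ 2 ∂μ) * (1 - cos2chi μ hT a f k) := by
  intro n _
  have hS : variance (birkhoffS T a f n) μ = ‖birkhoffL2 hT a f n‖ ^ 2 := by
    rw [variance_congr (birkhoffS_ae_eq_birkhoffL2 hT a f n),
      variance_eq_norm_sq_of_integral_eq_zero _ (integral_birkhoffL2 hT a f hfmean n)]
  have hZ : variance (Zfun hT a f n) μ = ‖useq hT a f n‖ ^ 2 := by
    have hTn := measurePreserving_Titer hT a n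
    change variance (useq hT a f n ∘ Titer T a n) μ = _
    rw [variance_congr (coeFn_koopman hTn _).symm, variance_eq_norm_sq_of_integral_eq_zero _
      ((integral_koopman hTn _).trans (integral_useq hT a f hfmean n)), norm_koopman]
  have hu (k : ℕ) : ∫ x, useq hT a f k x ^ 2 ∂μ = ‖useq hT a f k‖ ^ 2 :=
    integral_sq_eq_norm_sq _
  have hE (k : ℕ) : ∫ x, (μ[useq hT a f k|MeasurableSpace.comap (T (a (k + 1))) ‹_›]) x ^ 2 ∂μ
      = ‖PF (hT (a (k + 1))) (useq hT a f k)‖ ^ 2 :=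
    integral_sq_condExp_comap _ _
  have hcos (k : ℕ) : ‖useq hT a f k‖ ^ 2 * (1 - cos2chi μ hT a f k)
      = ‖useq hT a f k‖ ^ 2 - ‖PF (hT (a (k + 1))) (useq hT a f k)‖ ^ 2 := by
    rw [cos2chi, hE, hu]
    rcases eq_or_ne (useq hT a f k) 0 with h | h
    · simp [h]
    · field_simp
  simp only [hS, hZ, hu, hE, hcos, norm_sq_birkhoffL2, and_self]

/-- For `n ≥ 1`,
`Var_μ(S_n) = ‖u_n‖² + ∑_{k=1}^{n−1} (‖u_k‖² − ‖E[u_k | T_{a_{k+1}}^{-1}(𝓕)]‖²)`;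
equivalently `Var_μ(S_n) = Var_μ(Z_n) + ∑_{k=1}^{n−1} ‖u_k‖² (1 − cos²χ_k)`. -/
theorem variance_birkhoff_eq_sum_angles
    {X : Type*} [MeasurableSpace X] (μ : Measure X) [IsProbabilityMeasure μ]
    {A : Type*} (T : A → X → X)
    (hTmeas : ∀ b, Measurable (T b))
    (hT : ∀ b, MeasurePreserving (T b) μ μ)
    (hTsurj : ∀ b, Function.Surjective (T b))
    (hTnoninv : ∀ b, ¬Function.Injective (T b))
    (a : ℕ → A) (f : Lp ℝ 2 μ) (hfmean : ∫ x, f x ∂μ = 0) :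
    ∀ n : ℕ, 1 ≤ n →
      variance (birkhoffS T a (f : X → ℝ) n) μ =
        (∫ x, ((useq hT a f n : X → ℝ) x) ^ 2 ∂μ) +
          ∑ k ∈ Finset.Icc 1 (n - 1),
            ((∫ x, ((useq hT a f k : X → ℝ) x) ^ 2 ∂μ) -
              ∫ x, ((μ[(useq hT a f k : X → ℝ)|
                MeasurableSpace.comap (T (a (k + 1))) ‹_›]) x) ^ 2 ∂μ) ∧
      variance (birkhoffS T a (f : X → ℝ) n) μ =
        variance (Zfun hT a f n) μ +
          ∑ k ∈ Finset.Icc 1 (n - 1),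
            (∫ x, ((useq hT a f k : X → ℝ) x) ^ 2 ∂μ) * (1 - cos2chi μ hT a f k) :=
  variance_birkhoff_eq_sum_angles_general μ T hT a f hfmean
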